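/- For every ε > 0 there is a constant C_ε such that for all positive integers q, q_i and every integer m, |∑_{b ∈ (ℤ/q_iℤ)^*} g(a,q;b,q_i) e(-m b/q_i)| ≤ C_ε · q_i^ε, uniformly in a ∈ (ℤ/qℤ)^* and m. -/

import Mathlib

/-!
Summing over `b` first turns the sum into `φ(L)⁻¹ ∑ₓ e(a xᵏ / q) c_{qᵢ}(x - m)`, where
`L = lcm(q, qᵢ)`, `x` runs over the units mod `L` and `c_r` is the Ramanujan sum. Bounding the
phase `e(a xᵏ / q)` trivially, Möbius inversion gives `|c_r(n)| ≤ ∑_{e ∣ (r, n)} e`, and since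
reduction mod `e ∣ L` maps the units mod `L` onto the units mod `e` with fibres of size
`φ(L) / φ(e)`, the whole sum is at most `∑_{e ∣ qᵢ} e / φ(e) ≤ τ(qᵢ)²`. Finally `τ(n) ≪_δ n^δ`.
-/

open scoped Real

/-- e(t) = exp(2πit). -/
noncomputable def eChar (t : ℝ) : ℂ := Complex.exp (2 * π * Complex.I * t)

/-- The Gauss-type sum g(a,q;b,r) from the Waring–Goldbach major-arc analysis. -/
noncomputable def gaussG (k q r : ℕ) [NeZero (Nat.lcm q r)] (a b : ℕ) : ℂ :=
  (Nat.totient (Nat.lcm q r) : ℂ)⁻¹ *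
    ∑ x : (ZMod (Nat.lcm q r))ˣ,
      eChar ((a * ((x : ZMod (Nat.lcm q r)).val : ℝ) ^ k) / q +
        (b * ((x : ZMod (Nat.lcm q r)).val : ℝ)) / r)

open Finset ArithmeticFunction
open scoped ArithmeticFunction.Moebius

lemma eChar_add (s t : ℝ) : eChar (s + t) = eChar s * eChar t := by
  simp [eChar, ← Complex.exp_add, mul_add]

lemma eChar_natCast_mul (c : ℕ) (t : ℝ) : eChar (c * t) = eChar t ^ c := by
  rw [eChar, eChar, ← Complex.exp_nat_mul]
  push_cast
  ring_nf

lemma eChar_eq_one_iff {t : ℝ} : eChar t = 1 ↔ ∃ n : ℤ, t = n := by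
  have h2πi : 2 * π * Complex.I ≠ 0 := by simp [Real.pi_ne_zero]
  simp only [eChar, Complex.exp_eq_one_iff, mul_comm _ (2 * π * Complex.I),
    mul_right_inj' h2πi]
  exact exists_congr fun n => by norm_cast

lemma eChar_intCast (n : ℤ) : eChar n = 1 :=
  eChar_eq_one_iff.mpr ⟨n, rfl⟩

lemma norm_eChar (t : ℝ) : ‖eChar t‖ = 1 := by
  rw [eChar, mul_comm, ← mul_assoc]
  exact_mod_cast Complex.norm_exp_ofReal_mul_I (t * (2 * π))

lemma sum_range_eChar_mul_div {t : ℕ} (ht : t ≠ 0) (n : ℤ) :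
    ∑ c ∈ range t, eChar (c * n / t) = if (t : ℤ) ∣ n then (t : ℂ) else 0 := by
  have ht' : (t : ℝ) ≠ 0 := by exact_mod_cast ht
  simp_rw [mul_div_assoc, eChar_natCast_mul]
  split_ifs with hdvd
  · obtain ⟨j, rfl⟩ := hdvd
    simp [mul_div_cancel_left₀ _ ht', eChar_intCast]
  · have hζ : eChar (n / t) ≠ 1 := by
      rw [Ne, eChar_eq_one_iff]
      rintro ⟨j, hj⟩
      rw [div_eq_iff ht'] at hj
      exact hdvd ⟨j, by rw [mul_comm]; exact_mod_cast hj⟩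
    have hζt : eChar (n / t) ^ t = 1 := by
      rw [← eChar_natCast_mul, mul_div_cancel₀ _ ht', eChar_intCast]
    rw [geom_sum_eq hζ, hζt, sub_self, zero_div]

lemma sum_range_filter_dvd {M : Type*} [AddCommMonoid M] {d q : ℕ} (hd : d ∣ q) (f : ℕ → M) :
    ∑ b ∈ range q with d ∣ b, f b = ∑ c ∈ range (q / d), f (d * c) := by
  obtain ⟨r, rfl⟩ := hd
  rcases Nat.eq_zero_or_pos d with rfl | hd0
  · simp
  rw [Nat.mul_div_cancel_left r hd0]
  symm
  refine sum_nbij' (d * ·) (· / d) ?_ ?_ ?_ ?_ fun _ _ => rfl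
  · intro c hc
    simp only [mem_filter, mem_range] at hc ⊢
    exact ⟨by nlinarith, dvd_mul_right d c⟩
  · intro b hb
    simp only [mem_filter, mem_range] at hb ⊢
    exact Nat.div_lt_of_lt_mul hb.1
  · intro c _
    exact Nat.mul_div_cancel_left c hd0
  · intro b hb
    exact Nat.mul_div_cancel' (mem_filter.mp hb).2

lemma sum_divisors_filter_dvd_moebius {q : ℕ} (hq : q ≠ 0) (b : ℕ) :
    ∑ d ∈ q.divisors with d ∣ b, (μ d : ℂ) = if b.Coprime q then 1 else 0 := by
  have hgcd : {d ∈ q.divisors | d ∣ b} = (b.gcd q).divisors := by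
    rw [← Nat.divisors_filter_dvd_of_dvd hq (Nat.gcd_dvd_right b q)]
    exact filter_congr fun d hd => by
      rw [Nat.dvd_gcd_iff, and_iff_left (Nat.dvd_of_mem_divisors hd)]
  simp_rw [hgcd, ← intCoe_apply]
  rw [← coe_mul_zeta_apply, coe_moebius_mul_coe_zeta, one_apply]

noncomputable def ramanujanSum (q : ℕ) (n : ℤ) : ℂ :=
  ∑ b ∈ range q with b.Coprime q, eChar (b * n / q)

theorem ramanujanSum_eq_sum_divisors (q : ℕ) (n : ℤ) :
    ramanujanSum q n =
      ∑ d ∈ q.divisors,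
        (μ d : ℂ) * if ((q / d : ℕ) : ℤ) ∣ n then ((q / d : ℕ) : ℂ) else 0 := by
  rcases eq_or_ne q 0 with rfl | hq
  · simp [ramanujanSum]
  calc ramanujanSum q n
      = ∑ b ∈ range q, ∑ d ∈ q.divisors with d ∣ b, (μ d : ℂ) * eChar (b * n / q) := by
        rw [ramanujanSum, sum_filter]
        refine sum_congr rfl fun b _ => ?_
        rw [← sum_mul, sum_divisors_filter_dvd_moebius hq, ite_mul, one_mul, zero_mul]
    _ = ∑ d ∈ q.divisors, (μ d : ℂ) * ∑ b ∈ range q with d ∣ b, eChar (b * n / q) := by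
        simp_rw [sum_filter, mul_sum]
        rw [sum_comm]
        simp_rw [mul_ite, mul_zero]
    _ = _ := by
        refine sum_congr rfl fun d hd => ?_
        have hdq := Nat.dvd_of_mem_divisors hd
        have hd0 : (d : ℝ) ≠ 0 := by exact_mod_cast (Nat.pos_of_mem_divisors hd).ne'
        rw [sum_range_filter_dvd hdq, ← sum_range_eChar_mul_div
          ((Nat.div_ne_zero_iff_of_dvd hdq).mpr ⟨hq, Nat.ne_of_gt (Nat.pos_of_mem_divisors hd)⟩)]
        refine congrArg _ (sum_congr rfl fun c _ => ?_)
        rw [Nat.cast_div hdq hd0]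
        push_cast
        field_simp

theorem norm_ramanujanSum_le (q : ℕ) (n : ℤ) :
    ‖ramanujanSum q n‖ ≤ ∑ e ∈ q.divisors with ((e : ℕ) : ℤ) ∣ n, (e : ℝ) := by
  rw [ramanujanSum_eq_sum_divisors, sum_filter,
    ← Nat.sum_div_divisors q fun e => if (e : ℤ) ∣ n then (e : ℝ) else 0]
  refine (norm_sum_le _ _).trans (sum_le_sum fun d _ => ?_)
  rw [norm_mul]
  have hμ : ‖(μ d : ℂ)‖ ≤ 1 := by
    rw [Complex.norm_intCast]
    exact_mod_cast abs_moebius_le_one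
  split_ifs
  · simpa using mul_le_mul_of_nonneg_right hμ (Nat.cast_nonneg (q / d))
  · simp

lemma sum_units_val_eq_sum_coprime (q : ℕ) [NeZero q] {M : Type*} [AddCommMonoid M]
    (f : ℕ → M) :
    ∑ b : (ZMod q)ˣ, f (b : ZMod q).val = ∑ b ∈ range q with b.Coprime q, f b := by
  refine sum_bij (fun b _ => (b : ZMod q).val) (fun b _ => ?_) (fun b _ c _ h => ?_)
    (fun b hb => ?_) fun _ _ => rfl
  · exact mem_filter.mpr ⟨mem_range.mpr (ZMod.val_lt _), ZMod.val_coe_unit_coprime b⟩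
  · exact Units.ext (ZMod.val_injective q h)
  · obtain ⟨hbq, hcop⟩ := mem_filter.mp hb
    refine ⟨ZMod.unitOfCoprime b hcop, mem_univ _, ?_⟩
    rw [ZMod.coe_unitOfCoprime, ZMod.val_cast_of_lt (mem_range.mp hbq)]

lemma MonoidHom.card_fiber_mul_card_of_surjective {G H : Type*} [Group G] [Group H] [Fintype G]
    [Fintype H] [DecidableEq H] (f : G →* H) (hf : Function.Surjective f) (h : H) :
    #{g | f g = h} * Fintype.card H = Fintype.card G := by
  calc #{g | f g = h} * Fintype.card H = ∑ h' : H, #{g | f g = h'} := by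
        rw [sum_congr rfl fun h' _ => card_fiber_eq_of_mem_range f (hf h') (hf h), sum_const,
          smul_eq_mul, card_univ, mul_comm]
    _ = Fintype.card G := (card_eq_sum_card_fiberwise fun g _ => mem_univ (f g)).symm

lemma card_units_filter_cast_eq_mul_totient_le {N e : ℕ} [NeZero N] (he : e ∣ N) (z : ZMod e) :
    #{x : (ZMod N)ˣ | ((x : ZMod N).cast : ZMod e) = z} * e.totient ≤ N.totient := by
  have : NeZero e := ⟨fun h => NeZero.ne N (Nat.eq_zero_of_zero_dvd (h ▸ he))⟩
  by_cases hz : ∃ x₀ : (ZMod N)ˣ, ((x₀ : ZMod N).cast : ZMod e) = z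
  · obtain ⟨x₀, rfl⟩ := hz
    have hfiber (x : (ZMod N)ˣ) : ((x : ZMod N).cast : ZMod e) = (x₀ : ZMod N).cast ↔
        ZMod.unitsMap he x = ZMod.unitsMap he x₀ := by
      rw [Units.ext_iff, ZMod.unitsMap_val, ZMod.unitsMap_val]
    simp only [hfiber]
    rw [← ZMod.card_units_eq_totient, ← ZMod.card_units_eq_totient,
      MonoidHom.card_fiber_mul_card_of_surjective _ (ZMod.unitsMap_surjective he)]
  · push Not at hz
    simp [hz]

lemma natCast_dvd_val_sub_iff_cast_eq {N e : ℕ} [NeZero N] (x : ZMod N) (c : ℤ) :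
    (e : ℤ) ∣ (x.val : ℤ) - c ↔ (x.cast : ZMod e) = c := by
  have h := ZMod.intCast_eq_intCast_iff_dvd_sub c (x.val : ℤ) e
  push_cast at h
  rw [ZMod.cast_eq_val, eq_comm, h]

theorem sum_units_norm_ramanujanSum_le {N r : ℕ} [NeZero N] (hr : r ∣ N) (c : ℤ) :
    ∑ x : (ZMod N)ˣ, ‖ramanujanSum r ((x : ZMod N).val - c)‖ ≤
      N.totient * ∑ e ∈ r.divisors, (e : ℝ) / e.totient := by
  calc ∑ x : (ZMod N)ˣ, ‖ramanujanSum r ((x : ZMod N).val - c)‖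
      ≤ ∑ x : (ZMod N)ˣ,
          ∑ e ∈ r.divisors with ((e : ℕ) : ℤ) ∣ (x : ZMod N).val - c, (e : ℝ) :=
        sum_le_sum fun x _ => norm_ramanujanSum_le r _
    _ = ∑ e ∈ r.divisors,
          (#{x : (ZMod N)ˣ | (e : ℤ) ∣ (x : ZMod N).val - c} : ℝ) * e := by
        simp_rw [sum_filter]
        rw [sum_comm]
        simp_rw [← sum_filter, sum_const, nsmul_eq_mul]
    _ ≤ ∑ e ∈ r.divisors, (N.totient / e.totient : ℝ) * e := by
        refine sum_le_sum fun e he => mul_le_mul_of_nonneg_right ?_ (Nat.cast_nonneg e)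
        have heN := (Nat.dvd_of_mem_divisors he).trans hr
        have hφe : 0 < (e.totient : ℝ) := by
          exact_mod_cast Nat.totient_pos.mpr (Nat.pos_of_dvd_of_pos heN (NeZero.pos N))
        rw [le_div_iff₀ hφe]
        simp only [natCast_dvd_val_sub_iff_cast_eq]
        exact_mod_cast card_units_filter_cast_eq_mul_totient_le heN (c : ZMod e)
    _ = N.totient * ∑ e ∈ r.divisors, (e : ℝ) / e.totient := by
        rw [mul_sum]
        exact sum_congr rfl fun e _ => by ring

lemma le_card_divisors_mul_totient {n : ℕ} (hn : n ≠ 0) : n ≤ #n.divisors * n.totient := by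
  conv_lhs => rw [← Nat.prod_factorization_pow_eq_self hn]
  rw [Nat.card_divisors hn, Nat.totient_eq_prod_factorization hn, Finsupp.prod, Finsupp.prod,
    Nat.support_factorization, ← prod_mul_distrib]
  refine prod_le_prod' fun p hp => ?_
  have hprime := Nat.prime_of_mem_primeFactors hp
  have hp2 := hprime.two_le
  have ha : 1 ≤ n.factorization p :=
    hprime.factorization_pos_of_dvd hn (Nat.dvd_of_mem_primeFactors hp)
  have hp_le : p ≤ (n.factorization p + 1) * (p - 1) :=
    calc p ≤ 2 * (p - 1) := by omega
      _ ≤ _ := Nat.mul_le_mul_right _ (by omega)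
  calc p ^ n.factorization p = p * p ^ (n.factorization p - 1) := by
        rw [← pow_succ', Nat.sub_add_cancel ha]
    _ ≤ (n.factorization p + 1) * (p - 1) * p ^ (n.factorization p - 1) :=
        Nat.mul_le_mul_right _ hp_le
    _ = _ := by ring

lemma sum_divisors_div_totient_le_sq {n : ℕ} (hn : n ≠ 0) :
    ∑ e ∈ n.divisors, (e : ℝ) / e.totient ≤ (#n.divisors : ℝ) ^ 2 := by
  calc ∑ e ∈ n.divisors, (e : ℝ) / e.totient ≤ ∑ _e ∈ n.divisors, (#n.divisors : ℝ) := by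
        refine sum_le_sum fun e he => ?_
        have he0 : e ≠ 0 := (Nat.pos_of_mem_divisors he).ne'
        have hφ : 0 < (e.totient : ℝ) := by
          exact_mod_cast Nat.totient_pos.mpr (Nat.pos_of_ne_zero he0)
        rw [div_le_iff₀ hφ]
        calc (e : ℝ) ≤ #e.divisors * e.totient := by
              exact_mod_cast le_card_divisors_mul_totient he0
          _ ≤ #n.divisors * e.totient := by
            gcongr
            exact Nat.dvd_of_mem_divisors he
    _ = (#n.divisors : ℝ) ^ 2 := by rw [sum_const, nsmul_eq_mul, sq]

lemma add_one_le_pow_of_two_le {y : ℝ} (hy : 2 ≤ y) (a : ℕ) : (a + 1 : ℝ) ≤ y ^ a := by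
  have := one_add_mul_sub_le_pow (by linarith : (-1 : ℝ) ≤ y) a
  nlinarith [(Nat.cast_nonneg a : (0 : ℝ) ≤ a)]

lemma add_one_le_mul_pow {c y : ℝ} (hc : 1 < c) (hy : c ≤ y) (a : ℕ) :
    (a + 1 : ℝ) ≤ c / (c - 1) * y ^ a := by
  have hbern := one_add_mul_sub_le_pow (by linarith : (-1 : ℝ) ≤ c) a
  have hK : 0 ≤ c / (c - 1) := div_nonneg (by linarith) (by linarith)
  calc (a + 1 : ℝ) ≤ c / (c - 1) * (1 + a * (c - 1)) := by
        rw [div_mul_eq_mul_div, le_div_iff₀ (by linarith)]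
        nlinarith [mul_nonneg (Nat.cast_nonneg a : (0 : ℝ) ≤ a) (sq_nonneg (c - 1))]
    _ ≤ c / (c - 1) * y ^ a :=
        mul_le_mul_of_nonneg_left (hbern.trans (pow_le_pow_left₀ (by linarith) hy a)) hK

theorem card_divisors_le_mul_rpow {δ : ℝ} (hδ : 0 < δ) :
    ∃ C : ℝ, ∀ n : ℕ, n ≠ 0 → (#n.divisors : ℝ) ≤ C * (n : ℝ) ^ δ := by
  set c : ℝ := 2 ^ δ
  have hc : 1 < c := Real.one_lt_rpow (by norm_num) hδ
  set K := c / (c - 1)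
  have hK : 1 ≤ K := by rw [le_div_iff₀ (by linarith)]; linarith
  set B := ⌈(2 : ℝ) ^ δ⁻¹⌉₊
  -- `τ(n) / n^δ = ∏ (a + 1) / (p^δ)^a` over `p^a ∥ n`; the factor is `≤ 1` once `p^δ ≥ 2`, which
  -- holds for `p ≥ B`, and `≤ K` for each of the fewer than `B` smaller primes.
  have hfactor (p : ℕ) (hp : 2 ≤ p) (a : ℕ) :
      (a + 1 : ℝ) ≤ (if p < B then K else 1) * ((p : ℝ) ^ δ) ^ a := by
    split_ifs with hpB
    · exact add_one_le_mul_pow hc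
        (Real.rpow_le_rpow (by norm_num) (by exact_mod_cast hp) hδ.le) a
    · rw [one_mul]
      refine add_one_le_pow_of_two_le ?_ a
      have hpB' : (2 : ℝ) ^ δ⁻¹ ≤ p := (Nat.le_ceil _).trans (by exact_mod_cast not_lt.mp hpB)
      calc (2 : ℝ) = ((2 : ℝ) ^ δ⁻¹) ^ δ := by
            rw [← Real.rpow_mul (by norm_num), inv_mul_cancel₀ hδ.ne', Real.rpow_one]
        _ ≤ (p : ℝ) ^ δ := Real.rpow_le_rpow (by positivity) hpB' hδ.le
  refine ⟨K ^ B, fun n hn => ?_⟩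
  have hsmall : ∏ p ∈ n.primeFactors, (if p < B then K else 1) ≤ K ^ B := by
    rw [prod_ite, prod_const, prod_const_one, mul_one]
    refine pow_le_pow_right₀ hK ((card_le_card fun p hp => ?_).trans_eq (card_range B))
    exact mem_range.mpr (mem_filter.mp hp).2
  have hprod : ∏ p ∈ n.primeFactors, ((p : ℝ) ^ δ) ^ n.factorization p = (n : ℝ) ^ δ := by
    simp_rw [Real.rpow_pow_comm (Nat.cast_nonneg _)]
    rw [Real.finsetProd_rpow _ _ fun p _ => by positivity]
    congr 1
    conv_rhs => rw [← Nat.prod_factorization_pow_eq_self hn]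
    rw [Finsupp.prod, Nat.support_factorization]
    push_cast
    rfl
  calc (#n.divisors : ℝ) = ∏ p ∈ n.primeFactors, ((n.factorization p : ℝ) + 1) := by
        rw [Nat.card_divisors hn]
        push_cast
        rfl
    _ ≤ ∏ p ∈ n.primeFactors,
          ((if p < B then K else 1) * ((p : ℝ) ^ δ) ^ n.factorization p) :=
        prod_le_prod (fun _ _ => by positivity)
          fun p hp => hfactor p (Nat.prime_of_mem_primeFactors hp).two_le _
    _ = (∏ p ∈ n.primeFactors, (if p < B then K else 1)) * (n : ℝ) ^ δ := by
        rw [prod_mul_distrib, hprod]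
    _ ≤ K ^ B * (n : ℝ) ^ δ := by gcongr

lemma sum_units_gaussG_mul_eChar (k q r : ℕ) [NeZero r] [NeZero (Nat.lcm q r)] (a : ℕ)
    (m : ℤ) :
    ∑ b : (ZMod r)ˣ,
        gaussG k q r a (b : ZMod r).val * eChar (-(m * ((b : ZMod r).val : ℝ)) / r) =
      ((Nat.lcm q r).totient : ℂ)⁻¹ * ∑ x : (ZMod (Nat.lcm q r))ˣ,
        eChar (a * ((x : ZMod (Nat.lcm q r)).val : ℝ) ^ k / q) *
          ramanujanSum r ((x : ZMod (Nat.lcm q r)).val - m) := by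
  have hram (n : ℤ) : ramanujanSum r n = ∑ b : (ZMod r)ˣ, eChar ((b : ZMod r).val * n / r) :=
    (sum_units_val_eq_sum_coprime r fun b => eChar (b * n / r)).symm
  simp_rw [hram, gaussG, mul_sum, sum_mul]
  rw [sum_comm]
  refine sum_congr rfl fun x _ => sum_congr rfl fun b _ => ?_
  rw [mul_assoc, ← eChar_add, ← eChar_add]
  congr 2
  push_cast
  ring

theorem gauss_sum_unit_average_eps_bound_general (k : ℕ) (ε : ℝ) (hε : 0 < ε) :
    ∃ C : ℝ, ∀ q qi : ℕ, 0 < q → 0 < qi →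
      ∀ [NeZero qi] [NeZero (Nat.lcm q qi)], ∀ (a : (ZMod q)ˣ) (m : ℤ),
      ‖∑ b : (ZMod qi)ˣ,
          gaussG k q qi ((a : ZMod q)).val ((b : ZMod qi)).val *
            eChar (-(m * (((b : ZMod qi)).val : ℝ)) / qi)‖ ≤ C * (qi : ℝ) ^ ε := by
  obtain ⟨C, hC⟩ := card_divisors_le_mul_rpow (half_pos hε)
  refine ⟨C ^ 2, fun q qi _ hqi _ _ a m => ?_⟩
  have hφ : 0 < ((Nat.lcm q qi).totient : ℝ) := by
    exact_mod_cast Nat.totient_pos.mpr (NeZero.pos _)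
  rw [sum_units_gaussG_mul_eChar, norm_mul, norm_inv, Complex.norm_natCast]
  calc _ ≤ ((Nat.lcm q qi).totient : ℝ)⁻¹ *
        ((Nat.lcm q qi).totient * ∑ e ∈ qi.divisors, (e : ℝ) / e.totient) := by
        gcongr
        refine (norm_sum_le _ _).trans ?_
        simp_rw [norm_mul, norm_eChar, one_mul]
        exact sum_units_norm_ramanujanSum_le (Nat.dvd_lcm_right q qi) m
    _ = ∑ e ∈ qi.divisors, (e : ℝ) / e.totient := inv_mul_cancel_left₀ hφ.ne' _
    _ ≤ (#qi.divisors : ℝ) ^ 2 := sum_divisors_div_totient_le_sq hqi.ne'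
    _ ≤ (C * (qi : ℝ) ^ (ε / 2)) ^ 2 := by gcongr; exact hC qi hqi.ne'
    _ = C ^ 2 * (qi : ℝ) ^ ε := by
        rw [mul_pow, ← Real.rpow_mul_natCast (Nat.cast_nonneg _)]
        norm_num

/-- Gauss sum bound: for every ε > 0 there is C_ε so that uniformly in a ∈ U_q and m,
`|∑_{b ∈ U_{qᵢ}} g(a,q;b,qᵢ) e(-mb/qᵢ)| ≤ C_ε · qᵢ^ε`. -/
theorem gauss_sum_unit_average_eps_bound (k : ℕ) (hk : 2 ≤ k) (ε : ℝ) (hε : 0 < ε) :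
    ∃ C : ℝ, ∀ q qi : ℕ, 0 < q → 0 < qi →
      ∀ [NeZero qi] [NeZero (Nat.lcm q qi)], ∀ (a : (ZMod q)ˣ) (m : ℤ),
      ‖∑ b : (ZMod qi)ˣ,
          gaussG k q qi ((a : ZMod q)).val ((b : ZMod qi)).val *
            eChar (-(m * (((b : ZMod qi)).val : ℝ)) / qi)‖ ≤ C * (qi : ℝ) ^ ε :=
  gauss_sum_unit_average_eps_bound_general k ε hε
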